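/- arXiv:2102.02881 — 5 statements merged into one kernel-verified Lean document; each statement's English description precedes it below -/
import Mathlib

section
/- If a set of assumptions Δ is conflict-free in every agent's Bipolar ABA framework, then Δ is conflict-free in the aggregated framework obtained by any oligarchic rule (intersection of the rule sets of a nonempty set of veto agents). -/
/-- A Bipolar ABA rule `head ← body` (body is a single assumption). -/
structure ABARule (S : Type) where
  head : S
  body : S

/-- `Derives R a b`: there is a deduction (chain of rules in `R`) from `a` to `b`. -/
def Derives {S : Type} (R : Set (ABARule S)) : S → S → Prop :=
  Relation.ReflTransGen fun a b => (⟨b, a⟩ : ABARule S) ∈ R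

/-- `Δ` attacks `β` iff the contrary of `β` is deducible from some member of `Δ`. -/
def Attacks {S : Type} (co : S → S) (R : Set (ABARule S)) (Delta : Set S) (b : S) : Prop :=
  ∃ a ∈ Delta, Derives R a (co b)

/-- `Δ` attacks set `B` iff it attacks some member of `B`. -/
def AttacksSet {S : Type} (co : S → S) (R : Set (ABARule S)) (Delta B : Set S) : Prop :=
  ∃ b ∈ B, Attacks co R Delta b

/-- `Δ` is conflict-free iff it does not attack itself. -/
def ConflictFree {S : Type} (co : S → S) (R : Set (ABARule S)) (Delta : Set S) : Prop :=
  ¬ AttacksSet co R Delta Delta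

/-- Deductive closure of `Δ` within the assumptions `asm`. -/
def Cl {S : Type} (asm : Set S) (R : Set (ABARule S)) (Delta : Set S) : Set S :=
  {a | a ∈ asm ∧ ∃ d ∈ Delta, Derives R d a}

/-- `Δ` is closed iff `Δ = Cl(Δ)`. -/
def BABAClosed {S : Type} (asm : Set S) (R : Set (ABARule S)) (Delta : Set S) : Prop :=
  Cl asm R Delta = Delta

/-- Admissibility: closed, conflict-free, and counter-attacks every closed attacker. -/
def Admissible {S : Type} (asm : Set S) (co : S → S) (R : Set (ABARule S))
    (Delta : Set S) : Prop :=
  Delta ⊆ asm ∧ BABAClosed asm R Delta ∧ ConflictFree co R Delta ∧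
    ∀ B ⊆ asm, BABAClosed asm R B → AttacksSet co R B Delta → AttacksSet co R Delta B

/-- Preferred: ⊆-maximally admissible. -/
def Preferred {S : Type} (asm : Set S) (co : S → S) (R : Set (ABARule S))
    (Delta : Set S) : Prop :=
  Admissible asm co R Delta ∧
    ∀ D', Admissible asm co R D' → Delta ⊆ D' → D' = Delta

/-- `Δ` defends `α` iff `Δ` attacks every closed set attacking `α`. -/
def Defends {S : Type} (asm : Set S) (co : S → S) (R : Set (ABARule S))
    (Delta : Set S) (a : S) : Prop :=
  ∀ B ⊆ asm, BABAClosed asm R B → Attacks co R B a → AttacksSet co R Delta B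

/-- Complete: admissible and containing exactly the assumptions it defends. -/
def CompleteExt {S : Type} (asm : Set S) (co : S → S) (R : Set (ABARule S))
    (Delta : Set S) : Prop :=
  Admissible asm co R Delta ∧ Delta = {a | a ∈ asm ∧ Defends asm co R Delta a}

/-- Set-stable: closed, conflict-free, attacking `Cl({β})` for every `β` outside. -/
def SetStable {S : Type} (asm : Set S) (co : S → S) (R : Set (ABARule S))
    (Delta : Set S) : Prop :=
  Delta ⊆ asm ∧ BABAClosed asm R Delta ∧ ConflictFree co R Delta ∧
    ∀ b ∈ asm, b ∉ Delta → AttacksSet co R Delta (Cl asm R {b})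

/-- Well-founded extension: the intersection of all complete extensions. -/
def WellFoundedExt {S : Type} (asm : Set S) (co : S → S) (R : Set (ABARule S))
    (Delta : Set S) : Prop :=
  Delta = ⋂₀ {B | CompleteExt asm co R B}

/-- Ideal: ⊆-maximal among admissible sets contained in all preferred extensions. -/
def IdealExt {S : Type} (asm : Set S) (co : S → S) (R : Set (ABARule S))
    (Delta : Set S) : Prop :=
  (Admissible asm co R Delta ∧ ∀ B, Preferred asm co R B → Delta ⊆ B) ∧
    ∀ D', (Admissible asm co R D' ∧ ∀ B, Preferred asm co R B → D' ⊆ B) →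
      Delta ⊆ D' → D' = Delta

/-- Quota rule: keep the rules accepted by at least `q` agents. -/
def QuotaAgg {S : Type} {n : ℕ} (Rs : Fin n → Set (ABARule S)) (q : ℕ) :
    Set (ABARule S) :=
  {r | ∃ N' : Finset (Fin n), q ≤ N'.card ∧ ∀ i ∈ N', r ∈ Rs i}

/-- Oligarchic rule: keep the rules accepted by all veto agents. -/
def OligAgg {S : Type} {n : ℕ} (Rs : Fin n → Set (ABARule S)) (Nv : Set (Fin n)) :
    Set (ABARule S) :=
  {r | ∀ j ∈ Nv, r ∈ Rs j}

theorem Derives.mono {S : Type} {R R' : Set (ABARule S)} (hR : R ⊆ R') {a b : S}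
    (h : Derives R a b) : Derives R' a b :=
  Relation.ReflTransGen.mono (fun _ _ hr => hR hr) a b h

theorem AttacksSet.mono {S : Type} {co : S → S} {R R' : Set (ABARule S)} (hR : R ⊆ R')
    {Delta B : Set S} : AttacksSet co R Delta B → AttacksSet co R' Delta B
  | ⟨b, hb, a, ha, hab⟩ => ⟨b, hb, a, ha, hab.mono hR⟩

theorem ConflictFree.anti {S : Type} {co : S → S} {R R' : Set (ABARule S)} (hR : R ⊆ R')
    {Delta : Set S} (h : ConflictFree co R' Delta) : ConflictFree co R Delta :=
  fun hatt => h (hatt.mono hR)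

theorem oligAgg_subset {S : Type} {n : ℕ} (Rs : Fin n → Set (ABARule S)) {Nv : Set (Fin n)}
    {j : Fin n} (hj : j ∈ Nv) : OligAgg Rs Nv ⊆ Rs j :=
  fun _ hr => hr j hj

theorem olig_preserves_conflictFree_general {S : Type} (co : S → S)
    {n : ℕ} (Rs : Fin n → Set (ABARule S))
    (Nv : Set (Fin n)) (hNv : Nv.Nonempty)
    (Delta : Set S)
    (h : ∀ i, ConflictFree co (Rs i) Delta) :
    ConflictFree co (OligAgg Rs Nv) Delta := by
  obtain ⟨j, hj⟩ := hNv
  exact (h j).anti (oligAgg_subset Rs hj)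

theorem olig_preserves_conflictFree {S : Type} (asm : Set S) (co : S → S)
    {n : ℕ} (hn : 1 < n) (Rs : Fin n → Set (ABARule S))
    (Nv : Set (Fin n)) (hNv : Nv.Nonempty)
    (Delta : Set S) (hD : Delta ⊆ asm)
    (h : ∀ i, ConflictFree co (Rs i) Delta) :
    ConflictFree co (OligAgg Rs Nv) Delta :=
  olig_preserves_conflictFree_general co Rs Nv hNv Delta h
end

section
/- For |A| ≥ 4 assumptions and n ≥ 2 agents, every quota rule with quota q > 1 fails to preserve admissibility: there exists a profile of agents' Bipolar ABA frameworks and a set Δ admissible in each agent's framework such that Δ is not admissible in the framework aggregated by the quota rule with quota q. (Witness: N−q agents with empty rule set, q−1 agents with rules {contrary(D) ← B, contrary(C) ← D}, one agent with rules {contrary(D) ← A, contrary(C) ← D, A ← B}, and Δ = {A,B,C}.) -/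
/-!
In the aggregate only the rule `¬C ← D` survives: it is the one rule shared by all `q` non-empty
frameworks, while `¬D ← B` has only `q - 1` supporters and the rules `¬D ← A`, `A ← B` only one.
So `{D}` attacks `C ∈ Δ`, and `Δ = {A, B, C}` has lost every way of deriving `¬D` to attack back.
In each non-empty individual framework, on the other hand, `Δ` is conflict-free and attacks `D`,
the only assumption outside it, which is all admissibility asks for; in the empty framework no
contrary is derivable from assumptions, so nothing is attacked at all.
-/

variable {S : Type}

def IsRuleClosed (R : Set (ABARule S)) (T : Set S) : Prop :=
  ∀ r ∈ R, r.body ∈ T → r.head ∈ T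

theorem derives_of_mem {R : Set (ABARule S)} {r : ABARule S} (hr : r ∈ R) :
    Derives R r.body r.head :=
  Relation.ReflTransGen.single hr

theorem Derives.mem_of_isRuleClosed {R : Set (ABARule S)} {T : Set S} {a b : S}
    (hT : IsRuleClosed R T) (h : Derives R a b) (ha : a ∈ T) : b ∈ T := by
  induction h with
  | refl => exact ha
  | tail _ hstep ih => exact hT _ hstep ih

theorem derives_empty_iff {a b : S} : Derives (∅ : Set (ABARule S)) a b ↔ b = a :=
  Relation.reflTransGen_iff_eq fun _ h => h

section Admissibility

variable {asm : Set S} {co : S → S} {R : Set (ABARule S)} {Delta : Set S}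

theorem babaClosed_of_isRuleClosed {T : Set S} (hsub : Delta ⊆ asm) (hT : IsRuleClosed R T)
    (hDT : Delta ⊆ T) (hTD : T ∩ asm ⊆ Delta) : BABAClosed asm R Delta :=
  Set.Subset.antisymm
    (fun _ ⟨ha, _, hd, hder⟩ => hTD ⟨hder.mem_of_isRuleClosed hT (hDT hd), ha⟩)
    (fun a ha => ⟨hsub ha, a, ha, Relation.ReflTransGen.refl⟩)

theorem conflictFree_of_isRuleClosed {T : Set S} (hT : IsRuleClosed R T) (hDT : Delta ⊆ T)
    (hco : ∀ d ∈ Delta, co d ∉ T) : ConflictFree co R Delta :=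
  fun ⟨b, hb, _, ha, hder⟩ => hco b hb (hder.mem_of_isRuleClosed hT (hDT ha))

/-- An attacker of a conflict-free set must use an assumption outside it, so attacking all of
those suffices for admissibility. -/
theorem admissible_of_attacks_diff (hsub : Delta ⊆ asm) (hcl : BABAClosed asm R Delta)
    (hcf : ConflictFree co R Delta) (hatt : ∀ b ∈ asm \ Delta, Attacks co R Delta b) :
    Admissible asm co R Delta := by
  refine ⟨hsub, hcl, hcf, fun B hB _ ⟨d, hd, b, hb, hder⟩ => ⟨b, hb, hatt b ⟨hB hb, ?_⟩⟩⟩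
  exact fun hbD => hcf ⟨d, hd, b, hbD, hder⟩

theorem admissible_empty (hsub : Delta ⊆ asm) (hco : ∀ d ∈ Delta, co d ∉ asm) :
    Admissible asm co ∅ Delta := by
  have hT : IsRuleClosed (∅ : Set (ABARule S)) Delta := fun _ h => h.elim
  refine ⟨hsub, babaClosed_of_isRuleClosed hsub hT le_rfl Set.inter_subset_left,
    conflictFree_of_isRuleClosed hT le_rfl fun d hd hcod => hco d hd (hsub hcod), ?_⟩
  rintro B hB - ⟨d, hd, b, hb, hder⟩
  rw [derives_empty_iff] at hder
  exact absurd (hB (hder ▸ hb)) (hco d hd)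

/-- The only rule starts at `d ∉ Δ`, so `Δ` derives nothing but itself and cannot attack `{d}`. -/
theorem not_admissible_singleton {c d : S} (hc : c ∈ Delta) (hd : d ∈ asm) (hdD : d ∉ Delta)
    (hcoc : co c ∉ asm) (hcod : co d ∉ Delta) :
    ¬ Admissible asm co {⟨co c, d⟩} Delta := by
  rintro ⟨-, -, -, hdef⟩
  have hclosed : BABAClosed asm {⟨co c, d⟩} {d} := by
    refine babaClosed_of_isRuleClosed (T := {d, co c}) (by simpa using hd) ?_
      (by simp) ?_
    · rintro r rfl -
      simp
    · rintro x ⟨rfl | rfl, hx⟩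
      exacts [rfl, absurd hx hcoc]
  have hatt : AttacksSet co {⟨co c, d⟩} {d} Delta :=
    ⟨c, hc, d, rfl, derives_of_mem (R := {⟨co c, d⟩}) rfl⟩
  obtain ⟨b, hb, a, ha, hder⟩ := hdef {d} (by simpa using hd) hclosed hatt
  rw [Set.mem_singleton_iff.mp hb] at hder
  have hT : IsRuleClosed {⟨co c, d⟩} {a} := by
    rintro r rfl (rfl : d = a)
    exact absurd ha hdD
  exact hcod (Set.mem_singleton_iff.mp (hder.mem_of_isRuleClosed hT rfl) ▸ ha)

end Admissibility

section Quota

variable {n q : ℕ} {Rs : Fin n → Set (ABARule S)} {r : ABARule S}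

theorem exists_mem_of_mem_quotaAgg (hq : 0 < q) (hr : r ∈ QuotaAgg Rs q) : ∃ i, r ∈ Rs i := by
  obtain ⟨N, hN, hall⟩ := hr
  obtain ⟨i, hi⟩ := Finset.card_pos.mp (hq.trans_le hN)
  exact ⟨i, hall i hi⟩

theorem mem_quotaAgg_of_forall_lt (hqn : q ≤ n) (h : ∀ i : Fin n, i.val < q → r ∈ Rs i) :
    r ∈ QuotaAgg Rs q := by
  classical
  refine ⟨({i : Fin n | i.val < q} : Finset (Fin n)), ?_, fun i hi => h i (by simpa using hi)⟩
  rw [Fin.card_filter_val_lt, min_eq_right hqn]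

theorem notMem_quotaAgg_of_supporters_subset (s : Finset ℕ) (hs : s.card < q)
    (h : ∀ i : Fin n, r ∈ Rs i → i.val ∈ s) : r ∉ QuotaAgg Rs q := by
  rintro ⟨N, hN, hall⟩
  have : N.card ≤ s.card :=
    Finset.card_le_card_of_injOn Fin.val (fun i hi => h i (hall i hi)) Fin.val_injective.injOn
  omega

end Quota

inductive Sentence
  | A | B | C | D | notA | notB | notC | notD

namespace Sentence

def assumptions : Set Sentence := {A, B, C, D}

def contrary : Sentence → Sentence
  | A => notA
  | B => notB
  | C => notC
  | D => notD
  | s => s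

def delta : Set Sentence := {A, B, C}

def agreeingRules : Set (ABARule Sentence) := {⟨notD, B⟩, ⟨notC, D⟩}

def dissentingRules : Set (ABARule Sentence) := {⟨notD, A⟩, ⟨notC, D⟩, ⟨A, B⟩}

def profile (n q : ℕ) (i : Fin n) : Set (ABARule Sentence) :=
  if i.val = 0 then dissentingRules else if i.val < q then agreeingRules else ∅

theorem mem_profile_iff {n q : ℕ} {i : Fin n} {r : ABARule Sentence} :
    r ∈ profile n q i ↔
      (i.val = 0 ∧ r ∈ dissentingRules) ∨ (i.val ≠ 0 ∧ i.val < q ∧ r ∈ agreeingRules) := by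
  unfold profile
  split_ifs <;> simp_all

theorem delta_subset_assumptions : delta ⊆ assumptions := by
  simp [delta, assumptions, Set.insert_subset_iff]

theorem contrary_notMem_assumptions (s : Sentence) (hs : s ∈ assumptions) :
    contrary s ∉ assumptions := by
  rcases hs with rfl | rfl | rfl | rfl <;> simp [contrary, assumptions]

/-- Everything derivable from `Δ` in either non-empty framework. -/
def deltaConsequences : Set Sentence := {A, B, C, notD}

theorem admissible_delta_of_subset_union {R : Set (ABARule Sentence)}
    (hR : R ⊆ dissentingRules ∪ agreeingRules) (hatt : Attacks contrary R delta D) :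
    Admissible assumptions contrary R delta := by
  have hT : IsRuleClosed R deltaConsequences := by
    intro r hr
    rcases hR hr with (rfl | rfl | rfl) | (rfl | rfl) <;> simp [deltaConsequences]
  refine admissible_of_attacks_diff delta_subset_assumptions
    (babaClosed_of_isRuleClosed delta_subset_assumptions hT ?_ ?_)
    (conflictFree_of_isRuleClosed hT ?_ ?_) ?_
  · simp [delta, deltaConsequences, Set.insert_subset_iff]
  · rintro x ⟨hx, hxa⟩
    rcases hx with rfl | rfl | rfl | rfl <;> simp_all [delta, assumptions]
  · simp [delta, deltaConsequences, Set.insert_subset_iff]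
  · rintro d (rfl | rfl | rfl) <;> simp [contrary, deltaConsequences]
  · rintro b ⟨hb, hbD⟩
    rcases hb with rfl | rfl | rfl | rfl <;> simp_all [delta]

theorem admissible_profile {n q : ℕ} (i : Fin n) :
    Admissible assumptions contrary (profile n q i) delta := by
  unfold profile
  split_ifs
  · exact admissible_delta_of_subset_union Set.subset_union_left
      ⟨A, by simp [delta], derives_of_mem (r := ⟨notD, A⟩) (by simp [dissentingRules])⟩
  · exact admissible_delta_of_subset_union Set.subset_union_right
      ⟨B, by simp [delta], derives_of_mem (r := ⟨notD, B⟩) (by simp [agreeingRules])⟩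
  · exact admissible_empty delta_subset_assumptions fun d hd =>
      contrary_notMem_assumptions d (delta_subset_assumptions hd)

theorem quotaAgg_profile {n q : ℕ} (hq : 1 < q) (hqn : q ≤ n) :
    QuotaAgg (profile n q) q = {⟨notC, D⟩} := by
  ext r
  refine ⟨fun hr => ?_, fun hr => mem_quotaAgg_of_forall_lt hqn fun i hi => ?_⟩
  · obtain ⟨i, hi⟩ := exists_mem_of_mem_quotaAgg (by omega) hr
    have hcard₀ : ({0} : Finset ℕ).card < q := by simpa using hq
    rw [mem_profile_iff] at hi
    rcases hi with ⟨-, rfl | rfl | rfl⟩ | ⟨-, -, rfl | rfl⟩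
    · refine absurd hr (notMem_quotaAgg_of_supporters_subset {0} hcard₀ fun i hi => ?_)
      simpa [mem_profile_iff, dissentingRules, agreeingRules] using hi
    · rfl
    · refine absurd hr (notMem_quotaAgg_of_supporters_subset {0} hcard₀ fun i hi => ?_)
      simpa [mem_profile_iff, dissentingRules, agreeingRules] using hi
    · have hcard : (Finset.Ico 1 q).card < q := by rw [Nat.card_Ico]; omega
      refine absurd hr (notMem_quotaAgg_of_supporters_subset _ hcard fun i hi => ?_)
      simpa [mem_profile_iff, dissentingRules, agreeingRules, Nat.one_le_iff_ne_zero] using hi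
    · rfl
  · rw [hr, mem_profile_iff]
    by_cases h0 : i.val = 0 <;> simp [h0, hi, dissentingRules, agreeingRules]

end Sentence

theorem quota_gt_one_fails_admissibility_general (n q : ℕ)
    (hq : 1 < q) (hqn : q ≤ n) :
    ∃ (S : Type) (asm : Set S) (co : S → S) (a b c d : S),
      a ∈ asm ∧ b ∈ asm ∧ c ∈ asm ∧ d ∈ asm ∧
      a ≠ b ∧ a ≠ c ∧ a ≠ d ∧ b ≠ c ∧ b ≠ d ∧ c ≠ d ∧
      ∃ (Rs : Fin n → Set (ABARule S)) (Delta : Set S),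
        (∀ i, Admissible asm co (Rs i) Delta) ∧
        ¬ Admissible asm co (QuotaAgg Rs q) Delta := by
  refine ⟨Sentence, Sentence.assumptions, Sentence.contrary, .A, .B, .C, .D,
    by simp [Sentence.assumptions], by simp [Sentence.assumptions],
    by simp [Sentence.assumptions], by simp [Sentence.assumptions],
    nofun, nofun, nofun, nofun, nofun, nofun,
    Sentence.profile n q, Sentence.delta, Sentence.admissible_profile, ?_⟩
  rw [Sentence.quotaAgg_profile hq hqn]
  exact not_admissible_singleton (c := Sentence.C) (by simp [Sentence.delta])
    (by simp [Sentence.assumptions]) (by simp [Sentence.delta])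
    (by simp [Sentence.contrary, Sentence.assumptions])
    (by simp [Sentence.contrary, Sentence.delta])

theorem quota_gt_one_fails_admissibility (n q : ℕ) (hn : 2 ≤ n)
    (hq : 1 < q) (hqn : q ≤ n) :
    ∃ (S : Type) (asm : Set S) (co : S → S) (a b c d : S),
      a ∈ asm ∧ b ∈ asm ∧ c ∈ asm ∧ d ∈ asm ∧
      a ≠ b ∧ a ≠ c ∧ a ≠ d ∧ b ≠ c ∧ b ≠ d ∧ c ≠ d ∧
      ∃ (Rs : Fin n → Set (ABARule S)) (Delta : Set S),
        (∀ i, Admissible asm co (Rs i) Delta) ∧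
        ¬ Admissible asm co (QuotaAgg Rs q) Delta :=
  quota_gt_one_fails_admissibility_general n q hq hqn
end

section
/- Quota rules with quota q > 1 do not preserve set-stable extensions: with three agents whose rule sets are R_1 = {contrary(D) ← B, B ← A}, R_2 = {contrary(D) ← C}, R_3 = {contrary(D) ← A, contrary(C) ← D, A ← B} over assumptions {A,B,C,D}, the set {A,B,C} is set-stable in each agent's framework, but the aggregated rule set under any quota q > 1 is empty and {A,B,C} is not set-stable in the aggregated framework. -/
abbrev Sen4 := Fin 4 ⊕ Fin 4

def cmap4 : Sen4 → Sen4
  | .inl i => .inr i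
  | .inr i => .inr i

def asm4 : Set Sen4 := Set.range Sum.inl

def R7a : Set (ABARule Sen4) := {⟨.inr 3, .inl 1⟩, ⟨.inl 1, .inl 0⟩}

def R7b : Set (ABARule Sen4) := {⟨.inr 3, .inl 2⟩}

def R7c : Set (ABARule Sen4) := {⟨.inr 3, .inl 0⟩, ⟨.inr 2, .inl 3⟩, ⟨.inl 0, .inl 1⟩}

def Rs7 : Fin 3 → Set (ABARule Sen4) := ![R7a, R7b, R7c]

def D7 : Set Sen4 := {.inl 0, .inl 1, .inl 2}

/-! Every agent's rules keep what is derivable from `{A, B, C}` inside `{A, B, C, ¬D}`, and every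
agent has one rule deriving `¬D` from `A`, `B` or `C`; this makes `{A, B, C}` set-stable for each
agent. No rule is shared by two agents, so a quota above one keeps no rule at all, and without
rules `{A, B, C}` can no longer attack `D`. -/

def RuleClosed {S : Type} (R : Set (ABARule S)) (T : Set S) : Prop :=
  ∀ r ∈ R, r.body ∈ T → r.head ∈ T

theorem Derives.mem_of_ruleClosed {S : Type} {R : Set (ABARule S)} {T : Set S} {a b : S}
    (hR : RuleClosed R T) (h : Derives R a b) (ha : a ∈ T) : b ∈ T := by
  induction h with
  | refl => exact ha
  | tail _ hstep ih => exact hR _ hstep ih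

theorem Derives.eq_of_empty {S : Type} {a b : S} (h : Derives (∅ : Set (ABARule S)) a b) :
    a = b := by
  induction h with
  | refl => rfl
  | tail _ hstep => exact absurd hstep (Set.notMem_empty _)

theorem mem_cl_singleton {S : Type} {asm : Set S} (R : Set (ABARule S)) {b : S} (hb : b ∈ asm) :
    b ∈ Cl asm R {b} :=
  ⟨hb, b, rfl, .refl⟩

theorem SetStable.of_ruleClosed {S : Type} {asm : Set S} {co : S → S} {R : Set (ABARule S)}
    {Delta T : Set S} (hDelta : Delta ⊆ asm) (hT : Delta ⊆ T) (hTasm : T ∩ asm ⊆ Delta)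
    (hco : ∀ a ∈ Delta, co a ∉ T) (hR : RuleClosed R T)
    (hattack : ∀ b ∈ asm, b ∉ Delta → Attacks co R Delta b) :
    SetStable asm co R Delta := by
  refine ⟨hDelta, ?_, ?_, fun b hb hbD => ⟨b, mem_cl_singleton R hb, hattack b hb hbD⟩⟩
  · refine Set.Subset.antisymm ?_ fun a ha => ⟨hDelta ha, a, ha, .refl⟩
    rintro a ⟨ha, d, hd, hda⟩
    exact hTasm ⟨hda.mem_of_ruleClosed hR (hT hd), ha⟩
  · rintro ⟨b, hb, a, ha, hab⟩
    exact hco b hb (hab.mem_of_ruleClosed hR (hT ha))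

theorem not_setStable_empty {S : Type} {asm : Set S} {co : S → S} {Delta : Set S} {b : S}
    (hb : b ∈ asm) (hbDelta : b ∉ Delta) (hcoDelta : co b ∉ Delta) :
    ¬ SetStable asm co ∅ Delta := by
  rintro ⟨-, -, -, hstable⟩
  obtain ⟨c, ⟨-, d, rfl, hbc⟩, a, ha, hac⟩ := hstable b hb hbDelta
  rw [hbc.eq_of_empty, ← hac.eq_of_empty] at hcoDelta
  exact hcoDelta ha

theorem quotaAgg_eq_empty {S : Type} {n : ℕ} {Rs : Fin n → Set (ABARule S)} {q : ℕ}
    (hRs : Pairwise fun i j => Disjoint (Rs i) (Rs j)) (hq : 1 < q) : QuotaAgg Rs q = ∅ := by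
  refine Set.eq_empty_of_forall_notMem ?_
  rintro r ⟨N, hN, hr⟩
  obtain ⟨i, hi, j, hj, hij⟩ := Finset.one_lt_card.mp (hq.trans_le hN)
  exact Set.disjoint_left.mp (hRs hij) (hr i hi) (hr j hj)

theorem rs7_pairwise_disjoint : Pairwise fun i j => Disjoint (Rs7 i) (Rs7 j) := by
  intro i j hij
  rw [Set.disjoint_left]
  fin_cases i <;> fin_cases j <;>
    simp_all [Rs7, R7a, R7b, R7c, or_imp]

theorem rs7_ruleClosed (i : Fin 3) : RuleClosed (Rs7 i) (insert (.inr 3) D7) := by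
  fin_cases i <;> simp [RuleClosed, Rs7, R7a, R7b, R7c, D7]

theorem rs7_attacks (i : Fin 3) : Attacks cmap4 (Rs7 i) D7 (.inl 3) := by
  fin_cases i
  · exact ⟨.inl 1, by simp [D7], .single (by simp [Rs7, R7a, cmap4])⟩
  · exact ⟨.inl 2, by simp [D7], .single (by simp [Rs7, R7b, cmap4])⟩
  · exact ⟨.inl 0, by simp [D7], .single (by simp [Rs7, R7c, cmap4])⟩

theorem d7_subset_asm4 : D7 ⊆ asm4 := by
  rintro a (rfl | rfl | rfl) <;> exact ⟨_, rfl⟩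

theorem rs7_setStable (i : Fin 3) : SetStable asm4 cmap4 (Rs7 i) D7 := by
  refine SetStable.of_ruleClosed d7_subset_asm4 (Set.subset_insert _ _) ?_ ?_
    (rs7_ruleClosed i) ?_
  · rintro a ⟨ha, k, rfl⟩
    simpa using ha
  · rintro a (rfl | rfl | rfl) <;> simp [cmap4, D7]
  · rintro b ⟨k, rfl⟩ hk
    obtain rfl : k = 3 := by fin_cases k <;> simp_all [D7]
    exact rs7_attacks i

theorem quota_gt_one_fails_setStable :
    (∀ i, SetStable asm4 cmap4 (Rs7 i) D7) ∧
    ∀ q, 1 < q → q ≤ 3 →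
      QuotaAgg Rs7 q = ∅ ∧ ¬ SetStable asm4 cmap4 (QuotaAgg Rs7 q) D7 := by
  refine ⟨rs7_setStable, fun q hq _ => ?_⟩
  have hempty := quotaAgg_eq_empty rs7_pairwise_disjoint hq
  refine ⟨hempty, hempty ▸ not_setStable_empty (b := .inl 3) ⟨3, rfl⟩ ?_ ?_⟩ <;> simp [D7, cmap4]
end

section
/- Non-emptiness of the well-founded extension is k-exclusive for k = |A|: letting S = {contrary(A_{i+1}) ← A_i : 1 ≤ i < k} ∪ {contrary(A_1) ← A_k} over assumptions A_1,…,A_k, the framework whose rule set equals S has an empty well-founded extension, but for every proper subset R ⊂ S the framework with rule set R has a non-empty well-founded extension. -/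
def asmK (k : ℕ) : Set (Fin k ⊕ Fin k) := Set.range Sum.inl

def cmapK (k : ℕ) : (Fin k ⊕ Fin k) → (Fin k ⊕ Fin k)
  | .inl i => .inr i
  | .inr i => .inr i

/-- The cycle of attack rules `contrary(A_{i+1}) ← A_i` (indices mod `k`). -/
def ringRules (k : ℕ) (hk : 2 ≤ k) : Set (ABARule (Fin k ⊕ Fin k)) :=
  {r | ∃ i : Fin k, r = ⟨Sum.inr (i + (⟨1, by omega⟩ : Fin k)), Sum.inl i⟩}


/-!
Every rule of the ring derives a contrary from an assumption, so no deduction has more than one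
step and every set of assumptions is closed. In the full ring each `A_m` is attacked by the
closed set `{A_{m-1}}`, which the empty set cannot counter-attack; hence `∅` defends nothing and
is complete. Removing the rule `contrary(A_{i+1}) ← A_i` leaves `A_{i+1}` unattacked, and an
unattacked assumption is defended by, hence contained in, every complete extension.
-/

section General

variable {S : Type} {asm : Set S} {co : S → S} {R : Set (ABARule S)}

theorem derives_iff_of_head_ne_body (hR : ∀ r ∈ R, ∀ r' ∈ R, r.head ≠ r'.body) {a b : S} :
    Derives R a b ↔ a = b ∨ (⟨b, a⟩ : ABARule S) ∈ R := by
  constructor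
  · intro h
    rcases Relation.ReflTransGen.cases_head h with rfl | ⟨c, hac, hcb⟩
    · exact Or.inl rfl
    · rcases Relation.ReflTransGen.cases_head hcb with rfl | ⟨d, hcd, -⟩
      · exact Or.inr hac
      · exact absurd rfl (hR _ hac _ hcd)
  · rintro (rfl | h)
    · exact Relation.ReflTransGen.refl
    · exact Relation.ReflTransGen.single h

theorem babaClosed_of_derives_eq (hasm : ∀ a ∈ asm, ∀ b ∈ asm, Derives R a b → a = b)
    {D : Set S} (hD : D ⊆ asm) : BABAClosed asm R D := by
  refine Set.Subset.antisymm ?_ fun a ha => ⟨hD ha, a, ha, Relation.ReflTransGen.refl⟩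
  rintro a ⟨ha, d, hd, hda⟩
  rwa [← hasm d (hD hd) a ha hda]

theorem babaClosed_empty : BABAClosed asm R ∅ :=
  Set.eq_empty_of_subset_empty fun _ ⟨_, _, hd, _⟩ => hd

theorem admissible_empty_s15 : Admissible asm co R ∅ :=
  ⟨Set.empty_subset _, babaClosed_empty, fun ⟨_, hb, _⟩ => hb, fun _ _ _ ⟨_, hb, _⟩ => hb.elim⟩

theorem completeExt_empty
    (hatt : ∀ a ∈ asm, ∃ B ⊆ asm, BABAClosed asm R B ∧ Attacks co R B a) :
    CompleteExt asm co R ∅ := by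
  refine ⟨admissible_empty_s15, Set.eq_empty_of_subset_empty ?_ |>.symm⟩
  rintro a ⟨ha, hdef⟩
  obtain ⟨B, hB, hBcl, hBa⟩ := hatt a ha
  obtain ⟨_, _, _, hd, _⟩ := hdef B hB hBcl hBa
  exact hd

theorem mem_sInter_completeExt_of_not_attacked {a : S} (ha : a ∈ asm)
    (hna : ∀ b ∈ asm, ¬ Derives R b (co a)) :
    a ∈ ⋂₀ {B | CompleteExt asm co R B} := by
  intro Δ hΔ
  rw [hΔ.2]
  exact ⟨ha, fun B hB _ ⟨b, hb, hba⟩ => absurd hba (hna b (hB hb))⟩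

end General

section Ring

variable {k : ℕ} {hk : 2 ≤ k} {R : Set (ABARule (Fin k ⊕ Fin k))}

theorem derives_iff_of_subset_ringRules (hR : R ⊆ ringRules k hk) {a b : Fin k ⊕ Fin k} :
    Derives R a b ↔ a = b ∨ (⟨b, a⟩ : ABARule _) ∈ R := by
  refine derives_iff_of_head_ne_body fun r hr r' hr' => ?_
  obtain ⟨i, rfl⟩ := hR hr
  obtain ⟨j, rfl⟩ := hR hr'
  exact Sum.inr_ne_inl

theorem derives_inl_inl_of_subset_ringRules (hR : R ⊆ ringRules k hk) {i j : Fin k}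
    (h : Derives R (Sum.inl i) (Sum.inl j)) : i = j := by
  rcases (derives_iff_of_subset_ringRules hR).1 h with h | h
  · exact Sum.inl_injective h
  · obtain ⟨_, h⟩ := hR h
    exact absurd (ABARule.mk.inj h).1 Sum.inl_ne_inr

theorem babaClosed_of_subset_ringRules (hR : R ⊆ ringRules k hk) {D : Set (Fin k ⊕ Fin k)}
    (hD : D ⊆ asmK k) : BABAClosed (asmK k) R D := by
  refine babaClosed_of_derives_eq ?_ hD
  rintro _ ⟨i, rfl⟩ _ ⟨j, rfl⟩ h
  rw [derives_inl_inl_of_subset_ringRules hR h]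

theorem exists_closed_attacker_ringRules (a : Fin k ⊕ Fin k) (ha : a ∈ asmK k) :
    ∃ B ⊆ asmK k, BABAClosed (asmK k) (ringRules k hk) B ∧
      Attacks (cmapK k) (ringRules k hk) B a := by
  have : NeZero k := ⟨by omega⟩
  obtain ⟨m, rfl⟩ := ha
  obtain ⟨i, rfl⟩ := add_right_surjective (⟨1, by omega⟩ : Fin k) m
  have hB : {Sum.inl i} ⊆ asmK k := Set.singleton_subset_iff.2 ⟨i, rfl⟩
  exact ⟨_, hB, babaClosed_of_subset_ringRules subset_rfl hB,
    _, rfl, Relation.ReflTransGen.single ⟨i, rfl⟩⟩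

theorem not_derives_contrary_succ_of_not_mem (hR : R ⊆ ringRules k hk) {i : Fin k}
    (hi : ⟨Sum.inr (i + ⟨1, by omega⟩), Sum.inl i⟩ ∉ R) :
    ∀ b ∈ asmK k, ¬ Derives R b (cmapK k (Sum.inl (i + ⟨1, by omega⟩))) := by
  have : NeZero k := ⟨by omega⟩
  rintro _ ⟨j, rfl⟩ h
  rcases (derives_iff_of_subset_ringRules hR).1 h with h | h
  · exact Sum.inl_ne_inr h
  · obtain ⟨_, hl⟩ := hR h
    obtain ⟨hhead, hbody⟩ := ABARule.mk.inj hl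
    obtain rfl := Sum.inl_injective hbody
    obtain rfl := add_left_injective _ (Sum.inr_injective hhead)
    exact hi h

end Ring

theorem wellFounded_nonempty_kExclusive (k : ℕ) (hk : 2 ≤ k) :
    (⋂₀ {B | CompleteExt (asmK k) (cmapK k) (ringRules k hk) B}) = ∅ ∧
    ∀ R, R ⊂ ringRules k hk →
      (⋂₀ {B | CompleteExt (asmK k) (cmapK k) R B}) ≠ ∅ := by
  constructor
  · have hempty := completeExt_empty (exists_closed_attacker_ringRules (hk := hk))
    exact Set.subset_empty_iff.1 (Set.sInter_subset_of_mem hempty)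
  · intro R hR
    obtain ⟨_, ⟨i, rfl⟩, hi⟩ := Set.exists_of_ssubset hR
    have hna := not_derives_contrary_succ_of_not_mem hR.1 hi
    exact Set.nonempty_iff_ne_empty.1 ⟨_, mem_sInter_completeExt_of_not_attacked ⟨_, rfl⟩ hna⟩
end

section
/- Acyclicity is k-exclusive for k = |A| ≥ 2: with S = {contrary(A_{i+1}) ← A_i : 1 ≤ i < k} ∪ {contrary(A_1) ← A_k}, any framework whose rule set contains S has cyclic attacks, while any framework whose rule set is a proper subset of S is acyclic. -/
/-- The framework contains cyclic attacks: assumptions `α_1,…,α_m` (`m ≥ 2`) with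
`contrary(α_i) ← α_{i+1}` for all `i` (cyclically). -/
def HasCycle {S : Type} (asm : Set S) (co : S → S) (R : Set (ABARule S)) : Prop :=
  ∃ (m : ℕ) (f : Fin (m + 2) → S), (∀ i, f i ∈ asm) ∧
    ∀ i : Fin (m + 2), (⟨co (f i), f (i + 1)⟩ : ABARule S) ∈ R

/-!
The rules of `ringRules k` are themselves a cycle of attacks through all `k` assumptions.
Conversely, a cycle of attacks built from these rules alone must step from `A_{i+1}` to `A_i`,
so the set of indices it visits is nonempty and closed under `i ↦ i - 1` in `Fin k`, hence is all
of `Fin k`: the cycle uses every rule of `ringRules k`, which a proper subset lacks.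
-/

open Set

theorem HasCycle.mono {S : Type} {asm : Set S} {co : S → S} {R R' : Set (ABARule S)}
    (h : HasCycle asm co R) (hRR' : R ⊆ R') : HasCycle asm co R' :=
  let ⟨m, f, hasm, hrule⟩ := h
  ⟨m, f, hasm, fun i => hRR' (hrule i)⟩

open Fin.NatCast in
theorem Fin.eq_univ_of_sub_one_mem {k : ℕ} [NeZero k] {s : Set (Fin k)} (hs : s.Nonempty)
    (h : ∀ x ∈ s, x - 1 ∈ s) : s = univ := by
  obtain ⟨x, hx⟩ := hs
  have hsub : ∀ n : ℕ, x - (n : Fin k) ∈ s := by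
    intro n
    induction n with
    | zero => simpa using hx
    | succ n ih => simpa [sub_sub] using h _ ih
  refine eq_univ_of_forall fun y => ?_
  simpa using hsub (x - y).val

section RingRules

variable {k : ℕ} {hk : 2 ≤ k}

theorem mem_ringRules_iff [NeZero k] {r : ABARule (Fin k ⊕ Fin k)} :
    r ∈ ringRules k hk ↔ ∃ i : Fin k, r = ⟨Sum.inr (i + 1), Sum.inl i⟩ := by
  simp only [ringRules, mem_ofPred_eq, ← Fin.one_eq_mk_of_lt (show 1 < k by omega)]

theorem cmapK_inl_mem_ringRules_iff [NeZero k] {a b : Fin k} :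
    (⟨cmapK k (Sum.inl a), Sum.inl b⟩ : ABARule (Fin k ⊕ Fin k)) ∈ ringRules k hk ↔
      a = b + 1 := by
  simp [mem_ringRules_iff, cmapK]

theorem ringRules_subset_of_hasCycle {R : Set (ABARule (Fin k ⊕ Fin k))}
    (hR : R ⊆ ringRules k hk) (hcyc : HasCycle (asmK k) (cmapK k) R) : ringRules k hk ⊆ R := by
  have : NeZero k := ⟨by omega⟩
  obtain ⟨m, f, hasm, hrule⟩ := hcyc
  choose a ha using hasm
  have hstep : ∀ i, a i = a (i + 1) + 1 := fun i => by
    simpa [← ha, cmapK_inl_mem_ringRules_iff] using hR (hrule i)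
  have hvisit : range a = univ :=
    Fin.eq_univ_of_sub_one_mem (range_nonempty a) fun _ ⟨i, hi⟩ =>
      ⟨i + 1, by rw [← hi, hstep i, add_sub_cancel_right]⟩
  intro r hr
  obtain ⟨j, rfl⟩ := mem_ringRules_iff.mp hr
  obtain ⟨i, hi⟩ : j + 1 ∈ range a := hvisit ▸ mem_univ _
  have hnext : a (i + 1) = j := add_right_cancel (hstep i ▸ hi)
  simpa [← ha, hi, hnext, cmapK] using hrule i

end RingRules

theorem hasCycle_ringRules (k : ℕ) (hk : 2 ≤ k) :
    HasCycle (asmK k) (cmapK k) (ringRules k hk) := by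
  obtain ⟨m, rfl⟩ := Nat.exists_eq_add_of_le' hk
  refine ⟨m, fun i => Sum.inl (-i), fun i => mem_range_self _, fun i => ?_⟩
  rw [cmapK_inl_mem_ringRules_iff]
  abel

theorem acyclicity_kExclusive (k : ℕ) (hk : 2 ≤ k) :
    (∀ R : Set (ABARule (Fin k ⊕ Fin k)), ringRules k hk ⊆ R →
      HasCycle (asmK k) (cmapK k) R) ∧
    (∀ R : Set (ABARule (Fin k ⊕ Fin k)), R ⊂ ringRules k hk →
      ¬ HasCycle (asmK k) (cmapK k) R) :=
  ⟨fun _ hR => (hasCycle_ringRules k hk).mono hR,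
    fun _ hR hcyc => hR.2 (ringRules_subset_of_hasCycle hR.1 hcyc)⟩
end
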